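/- arXiv:2409.07986 — 2 statements merged into one kernel-verified Lean document; each statement's English description precedes it below -/
import Mathlib

section
/- For every ideal I of R_S one has Ī ⊆ I°: every element of R_S that is integral over I lies in the ideal generated by the monomials x^k with k ∈ S ∩ Γ₊(I). -/
open scoped BigOperators

noncomputable section

namespace ToricNewton

/-- The submonoid `S ⊆ ℤⁿ` generated by `b₁, …, b_r`. -/
def Sgroup {n r : ℕ} (b : Fin r → Fin n → ℤ) : AddSubmonoid (Fin n → ℤ) :=
  AddSubmonoid.closure (Set.range b)

/-- View an exponent `d ∈ ℕⁿ` as a point of `ℤⁿ`. -/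
def expToZ {n : ℕ} (d : Fin n →₀ ℕ) : Fin n → ℤ := fun i => (d i : ℤ)

lemma expToZ_zero {n : ℕ} : expToZ (0 : Fin n →₀ ℕ) = 0 := by
  funext i; simp [expToZ]

lemma expToZ_add {n : ℕ} (d e : Fin n →₀ ℕ) : expToZ (d + e) = expToZ d + expToZ e := by
  funext i; simp [expToZ]

/-- `R_S`: the subalgebra of `ℂ[[x₁,…,xₙ]]` of series with support in `S`;
this is the algebraic model of the local ring `𝒪_{X(S)}` at the origin. -/
def RS {n r : ℕ} (b : Fin r → Fin n → ℤ) : Subalgebra ℂ (MvPowerSeries (Fin n) ℂ) where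
  carrier := { f | ∀ d : Fin n →₀ ℕ, MvPowerSeries.coeff d f ≠ 0 → expToZ d ∈ Sgroup b }
  add_mem' := by
    intro f g hf hg d hd
    rw [Set.mem_setOf_eq] at hf hg
    rw [map_add] at hd
    by_cases h1 : MvPowerSeries.coeff d f ≠ 0
    · exact hf d h1
    · push_neg at h1
      exact hg d (by simpa [h1] using hd)
  zero_mem' := by intro d hd; simp at hd
  one_mem' := by
    intro d hd
    rw [MvPowerSeries.coeff_one] at hd
    split_ifs at hd with h
    · subst h; simpa [expToZ_zero] using (Sgroup b).zero_mem
    · exact absurd rfl hd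
  mul_mem' := by
    intro f g hf hg d hd
    rw [Set.mem_setOf_eq] at hf hg
    rw [MvPowerSeries.coeff_mul] at hd
    obtain ⟨p, hp, hne⟩ := Finset.exists_ne_zero_of_sum_ne_zero hd
    rw [Finset.HasAntidiagonal.mem_antidiagonal] at hp
    have h1 : MvPowerSeries.coeff p.1 f ≠ 0 := left_ne_zero_of_mul hne
    have h2 : MvPowerSeries.coeff p.2 g ≠ 0 := right_ne_zero_of_mul hne
    have := (Sgroup b).add_mem (hf _ h1) (hg _ h2)
    rwa [← expToZ_add, hp] at this
  algebraMap_mem' := by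
    intro c d hd
    rw [MvPowerSeries.algebraMap_apply, MvPowerSeries.coeff_C] at hd
    split_ifs at hd with h
    · subst h; simpa [expToZ_zero] using (Sgroup b).zero_mem
    · exact absurd rfl hd

/-- The exponent in `ℕⁿ` associated to `s ∈ ℤⁿ` (with nonnegative entries). -/
def natExp {n : ℕ} (s : Fin n → ℤ) : Fin n →₀ ℕ :=
  Finsupp.equivFunOnFinite.symm fun i => (s i).toNat

/-- The monomial power series `x^s` with coefficient `1`. -/
def monomialZ {n : ℕ} (s : Fin n → ℤ) : MvPowerSeries (Fin n) ℂ :=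
  MvPowerSeries.monomial (natExp s) 1

/-- View a lattice point as a point of `ℝⁿ`. -/
def toReal {n : ℕ} (k : Fin n → ℤ) : Fin n → ℝ := fun i => (k i : ℝ)

/-- The standard pairing on `ℝⁿ`. -/
def dotR {n : ℕ} (x v : Fin n → ℝ) : ℝ := ∑ i, x i * v i

/-- The cone of `S`, i.e. nonnegative real combinations of `b₁, …, b_r`. -/
def coneS {n r : ℕ} (b : Fin r → Fin n → ℤ) : Set (Fin n → ℝ) :=
  { x | ∃ lam : Fin r → ℝ, (∀ i, 0 ≤ lam i) ∧ x = ∑ i, lam i • toReal (b i) }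

/-- The dual cone of `cone(S)`. -/
def dualConeS {n r : ℕ} (b : Fin r → Fin n → ℤ) : Set (Fin n → ℝ) :=
  { u | ∀ v ∈ coneS b, 0 ≤ dotR u v }

/-- The Newton polyhedron `Γ₊(A)` of `A ⊆ S`: the convex hull of
`{k + v : k ∈ A, v ∈ cone(S)}`. -/
def NewtonPoly {n r : ℕ} (b : Fin r → Fin n → ℤ) (A : Set (Fin n → ℤ)) :
    Set (Fin n → ℝ) :=
  convexHull ℝ { x | ∃ k ∈ A, ∃ v ∈ coneS b, x = toReal k + v }

/-- `ℓ(v, P) = inf {⟨k, v⟩ : k ∈ P}`. -/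
def ellP {n : ℕ} (P : Set (Fin n → ℝ)) (v : Fin n → ℝ) : ℝ :=
  sInf ((fun k => dotR k v) '' P)

/-- `Δ(v, P) = {k ∈ P : ⟨k, v⟩ = ℓ(v, P)}`. -/
def faceP {n : ℕ} (P : Set (Fin n → ℝ)) (v : Fin n → ℝ) : Set (Fin n → ℝ) :=
  { k ∈ P | dotR k v = ellP P v }

/-- The support of a power series, as a subset of `ℤⁿ`. -/
def suppZ {n : ℕ} (g : MvPowerSeries (Fin n) ℂ) : Set (Fin n → ℤ) :=
  { s | ∃ d : Fin n →₀ ℕ, MvPowerSeries.coeff d g ≠ 0 ∧ s = expToZ d }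

/-- The Newton polyhedron `Γ₊(I)` of an ideal `I ⊆ R_S`. -/
def NewtonIdeal {n r : ℕ} (b : Fin r → Fin n → ℤ) (I : Ideal ↥(RS b)) :
    Set (Fin n → ℝ) :=
  NewtonPoly b (⋃ g ∈ (I : Set ↥(RS b)), suppZ (g : MvPowerSeries (Fin n) ℂ))

/-- `h` is integral over the ideal `I`:
`h^m + a₁ h^(m-1) + ⋯ + a_m = 0` with `aᵢ ∈ Iⁱ`. -/
def IsIntegralOverIdeal {R : Type*} [CommRing R] (I : Ideal R) (h : R) : Prop :=
  ∃ m : ℕ, 0 < m ∧ ∃ a : Fin m → R, (∀ i : Fin m, a i ∈ I ^ ((i : ℕ) + 1)) ∧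
    h ^ m + ∑ i : Fin m, a i * h ^ (m - 1 - (i : ℕ)) = 0

/-- `I°`: the ideal generated by the monomials `x^k` with `k ∈ S ∩ Γ₊(I)`. -/
def Icirc {n r : ℕ} (b : Fin r → Fin n → ℤ) (I : Ideal ↥(RS b)) : Ideal ↥(RS b) :=
  Ideal.span { m : ↥(RS b) | ∃ s : Fin n → ℤ, s ∈ Sgroup b ∧
    toReal s ∈ NewtonIdeal b I ∧ (m : MvPowerSeries (Fin n) ℂ) = monomialZ s }

/-- `C(Ī)`: the convex hull of the exponents of the monomials in the integral closure. -/
def CIbar {n r : ℕ} (b : Fin r → Fin n → ℤ) (I : Ideal ↥(RS b)) : Set (Fin n → ℝ) :=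
  convexHull ℝ (toReal '' { s : Fin n → ℤ | s ∈ Sgroup b ∧
    ∃ m : ↥(RS b), (m : MvPowerSeries (Fin n) ℂ) = monomialZ s ∧ IsIntegralOverIdeal I m })

/-- The coefficient of `g` at a lattice exponent `v`. -/
def coeffZ {n : ℕ} (g : MvPowerSeries (Fin n) ℂ) (v : Fin n → ℤ) : ℂ :=
  MvPowerSeries.coeff (natExp v) g

/-- `L(g_Δ)` evaluated at `z`: the polynomial `∑_{v ∈ supp(g) ∩ Δ} a_v z^v`. -/
def Lface {n : ℕ} (g : MvPowerSeries (Fin n) ℂ) (Δ : Set (Fin n → ℝ))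
    (z : Fin n → ℂ) : ℂ :=
  ∑ᶠ v ∈ { v : Fin n → ℤ | v ∈ suppZ g ∧ toReal v ∈ Δ },
    coeffZ g v * ∏ i, z i ^ (v i)

/-- `Δ` is a (nonempty) compact face of the polyhedron `P`. -/
def IsCompactFace {n r : ℕ} (b : Fin r → Fin n → ℤ) (P Δ : Set (Fin n → ℝ)) : Prop :=
  (∃ v ∈ dualConeS b, Δ = faceP P v) ∧ Δ.Nonempty ∧ IsCompact Δ

/-- A finite generating family of `I` is non-degenerate if on every compact face `Δ`
of `Γ₊(I)` the polynomials `L((gⱼ)_Δ)` have no common zero in the torus `(ℂ*)ⁿ`. -/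
def NondegenFamily {n r : ℕ} (b : Fin r → Fin n → ℤ) {l : ℕ}
    (g : Fin l → ↥(RS b)) (I : Ideal ↥(RS b)) : Prop :=
  ∀ Δ : Set (Fin n → ℝ), IsCompactFace b (NewtonIdeal b I) Δ →
    ¬ ∃ z : Fin n → ℂ, (∀ i, z i ≠ 0) ∧
      ∀ j, Lface (g j : MvPowerSeries (Fin n) ℂ) Δ z = 0

/-- An ideal is non-degenerate if it admits a non-degenerate finite generating family. -/
def Nondegenerate {n r : ℕ} (b : Fin r → Fin n → ℤ) (I : Ideal ↥(RS b)) : Prop :=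
  ∃ l : ℕ, ∃ g : Fin l → ↥(RS b), Ideal.span (Set.range g) = I ∧ NondegenFamily b g I

/-- The toric ideal `I_S ⊆ ℂ[x₁,…,x_r]`, generated by the binomials
`x^{α₊} - x^{α₋}` over the relations `α` of `b₁, …, b_r`. -/
def toricIdeal {n r : ℕ} (b : Fin r → Fin n → ℤ) : Ideal (MvPolynomial (Fin r) ℂ) :=
  Ideal.span { p | ∃ α : Fin r → ℤ, (∑ i, α i • b i) = 0 ∧
    p = (∏ i, MvPolynomial.X i ^ (α i).toNat) - ∏ i, MvPolynomial.X i ^ (-(α i)).toNat }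

/-- The affine toric variety `X(S) = V(I_S) ⊆ ℂ^r`. -/
def XS {n r : ℕ} (b : Fin r → Fin n → ℤ) : Set (Fin r → ℂ) :=
  { x | ∀ p ∈ toricIdeal b, MvPolynomial.eval x p = 0 }

/-!
If `h` is integral over `I`, every exponent `d` of `h` lies in `Γ₊(I)`. Otherwise a hyperplane
strictly separates `d` from `Γ₊(I)`, which is closed because, by Dickson's lemma, it is the convex
hull of finitely many points plus the cone; after a small perturbation the separating functional
becomes a weight `w` that is positive on every `bᵢ`, so every nonzero series in `R_S` has a least
`w`-weight, and the least weight `W` of `h` is smaller than every weight occurring in `I`. Least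
weights add under multiplication (initial forms multiply in the domain of power series), so in
`h ^ m + ∑ aᵢ h ^ (m-1-i) = 0` with `aᵢ ∈ I ^ (i+1)` the term `h ^ m` is the only one with a
monomial of weight `m W`, which is absurd.

By Dickson's lemma again, `S ∩ Γ₊(I)` lies in `F + S` for a finite `F ⊆ S ∩ Γ₊(I)`, so `h` is a
combination of the monomials `x ^ f` with `f ∈ F`, i.e. `h ∈ I°`.
-/

end ToricNewton

namespace MvPowerSeries

open Finsupp (weight)

variable {σ R : Type*} (w : σ → ℝ)

section Semiring

variable [CommSemiring R]

def weights (f : MvPowerSeries σ R) : Set ℝ := weight w '' {d | coeff d f ≠ 0}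

variable {w}

lemma mem_weights {f : MvPowerSeries σ R} {d : σ →₀ ℕ} (hd : coeff d f ≠ 0) :
    weight w d ∈ weights w f :=
  ⟨d, hd, rfl⟩

lemma add_mem_lowerBounds_weights_mul {f g : MvPowerSeries σ R} {a b : ℝ}
    (hf : a ∈ lowerBounds (weights w f)) (hg : b ∈ lowerBounds (weights w g)) :
    a + b ∈ lowerBounds (weights w (f * g)) := by
  classical
  rintro _ ⟨d, hd : coeff d (f * g) ≠ 0, rfl⟩
  rw [coeff_mul] at hd
  obtain ⟨p, hp, hne⟩ := Finset.exists_ne_zero_of_sum_ne_zero hd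
  rw [← Finset.HasAntidiagonal.mem_antidiagonal.mp hp, map_add]
  exact add_le_add (hf (mem_weights (left_ne_zero_of_mul hne)))
    (hg (mem_weights (right_ne_zero_of_mul hne)))

lemma mem_lowerBounds_weights_add {f g : MvPowerSeries σ R} {a : ℝ}
    (hf : a ∈ lowerBounds (weights w f)) (hg : a ∈ lowerBounds (weights w g)) :
    a ∈ lowerBounds (weights w (f + g)) := by
  rintro _ ⟨d, hd : coeff d (f + g) ≠ 0, rfl⟩
  rw [map_add] at hd
  by_cases hfd : coeff d f = 0
  · exact hg (mem_weights (by simpa [hfd] using hd))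
  · exact hf (mem_weights hfd)

variable (w) in
def initialForm (a : ℝ) (f : MvPowerSeries σ R) : MvPowerSeries σ R :=
  fun d => if weight w d = a then coeff d f else 0

lemma coeff_initialForm (a : ℝ) (f : MvPowerSeries σ R) (d : σ →₀ ℕ) :
    coeff d (initialForm w a f) = if weight w d = a then coeff d f else 0 :=
  rfl

lemma initialForm_ne_zero {f : MvPowerSeries σ R} {a : ℝ} (ha : a ∈ weights w f) :
    initialForm w a f ≠ 0 := by
  obtain ⟨d, hd, rfl⟩ := ha
  intro h0
  apply hd
  simpa [coeff_initialForm] using congrArg (coeff d) h0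

lemma weight_eq_of_coeff_initialForm_mul_ne_zero {f g : MvPowerSeries σ R} {a b : ℝ}
    {e : σ →₀ ℕ} (he : coeff e (initialForm w a f * initialForm w b g) ≠ 0) :
    weight w e = a + b := by
  classical
  rw [coeff_mul] at he
  obtain ⟨p, hp, hne⟩ := Finset.exists_ne_zero_of_sum_ne_zero he
  rw [← Finset.HasAntidiagonal.mem_antidiagonal.mp hp, map_add]
  rw [coeff_initialForm, coeff_initialForm] at hne
  split_ifs at hne with h1 h2 <;> simp_all

lemma coeff_mul_eq_coeff_initialForm_mul {f g : MvPowerSeries σ R} {a b : ℝ}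
    (hf : a ∈ lowerBounds (weights w f)) (hg : b ∈ lowerBounds (weights w g))
    {e : σ →₀ ℕ} (he : weight w e = a + b) :
    coeff e (f * g) = coeff e (initialForm w a f * initialForm w b g) := by
  classical
  rw [coeff_mul, coeff_mul]
  refine Finset.sum_congr rfl fun p hp => ?_
  rw [← Finset.HasAntidiagonal.mem_antidiagonal.mp hp, map_add] at he
  rw [coeff_initialForm, coeff_initialForm]
  by_cases hfp : coeff p.1 f = 0
  · simp [hfp]
  by_cases hgp : coeff p.2 g = 0
  · simp [hgp]
  have h1 := hf (mem_weights hfp)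
  have h2 := hg (mem_weights hgp)
  rw [if_pos (by linarith), if_pos (by linarith)]

lemma exists_isLeast_weights {f : MvPowerSeries σ R} (hf : f ≠ 0)
    (hfin : ∀ B, {d | coeff d f ≠ 0 ∧ weight w d ≤ B}.Finite) :
    ∃ W, IsLeast (weights w f) W := by
  obtain ⟨d₀, hd₀⟩ := (ne_zero_iff_exists_coeff_ne_zero f).mp hf
  obtain ⟨d, ⟨hd, -⟩, hmin⟩ := Set.exists_min_image _ (weight w) (hfin (weight w d₀))
    ⟨d₀, hd₀, le_rfl⟩
  refine ⟨weight w d, mem_weights hd, ?_⟩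
  rintro _ ⟨e, he : coeff e f ≠ 0, rfl⟩
  by_cases hle : weight w e ≤ weight w d₀
  · exact hmin e ⟨he, hle⟩
  · exact (hmin d₀ ⟨hd₀, le_rfl⟩).trans (le_of_not_ge hle)

lemma mem_lowerBounds_weights_of_mem_pow {A : Type*} [CommRing A]
    (φ : A →+* MvPowerSeries σ R) {I : Ideal A} {c : ℝ}
    (hI : ∀ x ∈ I, c ∈ lowerBounds (weights w (φ x))) (k : ℕ) {x : A} (hx : x ∈ I ^ (k + 1)) :
    (k + 1) * c ∈ lowerBounds (weights w (φ x)) := by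
  induction k generalizing x with
  | zero => simpa using hI x (by simpa using hx)
  | succ k ih =>
    rw [pow_succ] at hx
    refine Submodule.mul_induction_on hx (fun y hy z hz => ?_) (fun y z hy hz => ?_)
    · rw [map_mul, Nat.cast_succ, add_one_mul]
      exact add_mem_lowerBounds_weights_mul (ih hy) (hI z hz)
    · rw [map_add]
      exact mem_lowerBounds_weights_add hy hz

end Semiring

variable [CommRing R] [IsDomain R] {w}

lemma isLeast_weights_mul {f g : MvPowerSeries σ R} {a b : ℝ}
    (hf : IsLeast (weights w f) a) (hg : IsLeast (weights w g) b) :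
    IsLeast (weights w (f * g)) (a + b) := by
  refine ⟨?_, add_mem_lowerBounds_weights_mul hf.2 hg.2⟩
  obtain ⟨e, he⟩ := (ne_zero_iff_exists_coeff_ne_zero _).mp
    (mul_ne_zero (initialForm_ne_zero hf.1) (initialForm_ne_zero hg.1))
  have hwe := weight_eq_of_coeff_initialForm_mul_ne_zero he
  rw [← coeff_mul_eq_coeff_initialForm_mul hf.2 hg.2 hwe] at he
  exact hwe ▸ mem_weights he

lemma isLeast_weights_pow {f : MvPowerSeries σ R} {a : ℝ} (hf : IsLeast (weights w f) a)
    (k : ℕ) : IsLeast (weights w (f ^ k)) (k * a) := by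
  induction k with
  | zero =>
    classical
    refine ⟨⟨0, by simp, by simp⟩, ?_⟩
    rintro _ ⟨d, hd : coeff d 1 ≠ 0, rfl⟩
    rw [coeff_one] at hd
    simp [(ite_ne_right_iff.mp hd).1]
  | succ k ih => simpa [pow_succ, add_one_mul] using isLeast_weights_mul ih hf

end MvPowerSeries

lemma isClosed_setOf_nonneg_sum_smul {ι E : Type*} [Fintype ι] [TopologicalSpace E]
    [AddCommGroup E] [Module ℝ E] [ContinuousAdd E] [ContinuousSMul ℝ E] [T2Space E]
    (v : ι → E) (φ : E →L[ℝ] ℝ) (hφ : ∀ i, 0 < φ (v i)) :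
    IsClosed {x | ∃ lam : ι → ℝ, (∀ i, 0 ≤ lam i) ∧ x = ∑ i, lam i • v i} := by
  set C := {x | ∃ lam : ι → ℝ, (∀ i, 0 ≤ lam i) ∧ x = ∑ i, lam i • v i}
  refine isClosed_of_closure_subset fun x hx => ?_
  set M := φ x + 1
  set K := (fun lam : ι → ℝ => ∑ i, lam i • v i) '' Set.Icc 0 fun i => M / φ (v i)
  have hK : IsCompact K := isCompact_Icc.image (by fun_prop)
  -- as `φ` is positive on the `vᵢ`, it bounds the coefficients of the points of `C`
  have hCK : {y | φ y < M} ∩ C ⊆ K := by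
    rintro _ ⟨hM, ⟨lam, hlam, rfl⟩⟩
    refine ⟨lam, ⟨hlam, fun i => ?_⟩, rfl⟩
    change φ _ < M at hM
    rw [map_sum] at hM
    simp only [map_smul, smul_eq_mul] at hM
    rw [le_div_iff₀ (hφ i)]
    exact (Finset.single_le_sum (fun j _ => mul_nonneg (hlam j) (hφ j).le)
      (Finset.mem_univ i)).trans hM.le
  have hxK : x ∈ K := by
    have hopen : IsOpen {y | φ y < M} := isOpen_lt φ.continuous continuous_const
    exact closure_minimal hCK hK.isClosed (hopen.inter_closure ⟨show φ x < M by simp [M], hx⟩)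
  obtain ⟨lam, hlam, rfl⟩ := hxK
  exact ⟨lam, hlam.1, rfl⟩

open Matrix in
lemma dotProduct_one_pos {ι : Type*} [Fintype ι] {y : ι → ℝ} (hy : 0 ≤ y) (hy0 : y ≠ 0) :
    0 < y ⬝ᵥ 1 := by
  rw [dotProduct_one]
  obtain ⟨j, hj⟩ := Function.ne_iff.mp hy0
  exact Finset.sum_pos' (fun i _ => hy i) ⟨j, Finset.mem_univ j, (hy j).lt_of_ne' hj⟩

open Matrix in
lemma exists_separating_weight {n : ℕ} {ι : Type*} {y : ι → Fin n → ℝ} (hy : ∀ i, 0 ≤ y i)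
    (hy0 : ∀ i, y i ≠ 0) {C : Set (Fin n → ℝ)} (hCconv : Convex ℝ C) (hCcl : IsClosed C)
    (hCnn : ∀ x ∈ C, 0 ≤ x) (hCray : ∀ x ∈ C, ∀ i, ∀ t : ℝ, 0 ≤ t → x + t • y i ∈ C)
    {p : Fin n → ℝ} (hp : 0 ≤ p) (hpC : p ∉ C) :
    ∃ w : Fin n → ℝ, (∀ i, 0 < y i ⬝ᵥ w) ∧ ∃ u, p ⬝ᵥ w < u ∧ ∀ x ∈ C, u < x ⬝ᵥ w := by
  rcases C.eq_empty_or_nonempty with rfl | ⟨a, ha⟩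
  · exact ⟨1, fun i => dotProduct_one_pos (hy i) (hy0 i), _, lt_add_one _, by simp⟩
  obtain ⟨f, u, hfp, hfC⟩ := geometric_hahn_banach_point_closed hCconv hCcl hpC
  set w₀ : Fin n → ℝ := fun j => f (Pi.single j 1)
  have hf : ∀ x, f x = x ⬝ᵥ w₀ := fun x => by
    conv_lhs => rw [pi_eq_sum_univ' x, map_sum]
    simp [dotProduct, w₀]
  -- `f` is bounded below on `C`, hence nonnegative on its recession directions
  have hy_w₀ : ∀ i, 0 ≤ y i ⬝ᵥ w₀ := by
    intro i
    by_contra! hneg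
    have hau : u < a ⬝ᵥ w₀ := hf a ▸ hfC a ha
    have := hf _ ▸ hfC _ (hCray a ha i ((a ⬝ᵥ w₀ - u) / -(y i ⬝ᵥ w₀))
      (div_nonneg (by linarith) (by linarith)))
    rw [add_dotProduct, smul_dotProduct, smul_eq_mul, div_mul_eq_mul_div, div_neg,
      mul_div_cancel_right₀ _ hneg.ne] at this
    linarith
  -- tilting by `ε • 1` makes the weight positive on the `yᵢ` and only raises it on the orthant;
  -- `ε` is small enough to keep `p` below `u`
  set ε := (u - p ⬝ᵥ w₀) / (p ⬝ᵥ 1 + 1)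
  have hp1 : 0 ≤ p ⬝ᵥ 1 := by rw [dotProduct_one]; exact Finset.sum_nonneg fun j _ => hp j
  have hε : 0 < ε := div_pos (by linarith [hf p]) (by linarith)
  have hw : ∀ x, x ⬝ᵥ (w₀ + ε • 1) = x ⬝ᵥ w₀ + ε * x ⬝ᵥ 1 := fun x => by
    rw [dotProduct_add, dotProduct_smul, smul_eq_mul]
  refine ⟨w₀ + ε • 1, fun i => ?_, u, ?_, fun x hx => ?_⟩
  · rw [hw]
    nlinarith [hy_w₀ i, dotProduct_one_pos (hy i) (hy0 i)]
  · rw [hw, show ε * p ⬝ᵥ 1 = (u - p ⬝ᵥ w₀) * (p ⬝ᵥ 1 / (p ⬝ᵥ 1 + 1)) by ring]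
    have : p ⬝ᵥ 1 / (p ⬝ᵥ 1 + 1) < 1 := (div_lt_one (by linarith)).mpr (by linarith)
    nlinarith [hf p]
  · have hx1 : 0 ≤ x ⬝ᵥ 1 := by
      rw [dotProduct_one]; exact Finset.sum_nonneg fun j _ => hCnn x hx j
    rw [hw]
    nlinarith [hf x ▸ hfC x hx]

namespace ToricNewton

open Matrix MvPowerSeries Finsupp
open scoped Pointwise

/-- In weight `m W`, `h ^ m` is the only term of the integral equation with a nonzero
coefficient. -/
lemma not_isIntegralOverIdeal_of_weights_lt {σ A R : Type*} [CommRing A] [CommRing R]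
    [IsDomain R] (φ : A →+* MvPowerSeries σ R) {w : σ → ℝ} {I : Ideal A} {h : A} {W c : ℝ}
    (hh : IsLeast (weights w (φ h)) W) (hI : ∀ x ∈ I, c ∈ lowerBounds (weights w (φ x)))
    (hWc : W < c) : ¬ IsIntegralOverIdeal I h := by
  rintro ⟨m, -, a, ha, heq⟩
  obtain ⟨d, hd : coeff d (φ h ^ m) ≠ 0, hdW⟩ := (isLeast_weights_pow hh m).1
  have hterm : ∀ i : Fin m, coeff d (φ (a i) * φ h ^ (m - 1 - (i : ℕ))) = 0 := by
    intro i
    by_contra hne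
    have hle := add_mem_lowerBounds_weights_mul
      (mem_lowerBounds_weights_of_mem_pow φ hI i (ha i))
      (isLeast_weights_pow hh (m - 1 - (i : ℕ))).2 (mem_weights hne)
    have hcast : ((m - 1 - (i : ℕ) : ℕ) : ℝ) = m - 1 - i := by
      have := i.isLt
      rw [Nat.cast_sub (by omega), Nat.cast_sub (by omega), Nat.cast_one]
    rw [hdW, hcast] at hle
    nlinarith [(Nat.cast_nonneg (i : ℕ) : (0 : ℝ) ≤ i)]
  have := congrArg (coeff d ∘ φ) heq
  simp only [Function.comp, map_add, map_sum, map_mul, map_pow, map_zero, hterm,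
    Finset.sum_const_zero, add_zero] at this
  exact hd this

section

variable {n r : ℕ} {b : Fin r → Fin n → ℤ}

lemma toReal_add (s t : Fin n → ℤ) : toReal (s + t) = toReal s + toReal t := by
  funext j; simp [toReal]

lemma toReal_nonneg {s : Fin n → ℤ} (hs : 0 ≤ s) : 0 ≤ toReal s :=
  fun j => by simpa [toReal] using hs j

lemma toReal_ne_zero {s : Fin n → ℤ} (hs : s ≠ 0) : toReal s ≠ 0 := by
  obtain ⟨j, hj⟩ := Function.ne_iff.mp hs
  exact Function.ne_iff.mpr ⟨j, by simpa [toReal] using hj⟩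

lemma expToZ_nonneg (d : Fin n →₀ ℕ) : 0 ≤ expToZ d :=
  fun j => Int.natCast_nonneg (d j)

lemma expToZ_natExp {s : Fin n → ℤ} (hs : 0 ≤ s) : expToZ (natExp s) = s := by
  funext j; simp [expToZ, natExp, Int.toNat_of_nonneg (hs j)]

lemma le_of_expToZ_eq_add {d e : Fin n →₀ ℕ} {s : Fin n → ℤ} (hs : 0 ≤ s)
    (h : expToZ d = expToZ e + s) : e ≤ d ∧ expToZ (d - e) = s := by
  have hj : ∀ j, (d j : ℤ) = e j + s j := fun j => congrFun h j
  have hs' : ∀ j, 0 ≤ s j := hs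
  refine ⟨fun j => by have := hj j; have := hs' j; omega, funext fun j => ?_⟩
  have := hj j
  have := hs' j
  simp only [expToZ, Finsupp.coe_tsub, Pi.sub_apply]
  omega

lemma weight_eq_dotProduct (w : Fin n → ℝ) (d : Fin n →₀ ℕ) :
    weight w d = toReal (expToZ d) ⬝ᵥ w := by
  simp [weight_apply, Finsupp.sum_fintype, dotProduct, toReal, expToZ]

lemma mem_sgroup_iff {s : Fin n → ℤ} : s ∈ Sgroup b ↔ ∃ c : Fin r → ℕ, s = ∑ i, c i • b i :=
  AddSubmonoid.mem_closure_range_iff_of_fintype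

lemma nonneg_of_mem_sgroup (hb_nonneg : ∀ i j, 0 ≤ b i j) {s : Fin n → ℤ}
    (hs : s ∈ Sgroup b) : 0 ≤ s := by
  obtain ⟨c, rfl⟩ := mem_sgroup_iff.mp hs
  exact Finset.sum_nonneg fun i _ => nsmul_nonneg (hb_nonneg i) _

lemma toReal_mem_coneS {s : Fin n → ℤ} (hs : s ∈ Sgroup b) : toReal s ∈ coneS b := by
  obtain ⟨c, rfl⟩ := mem_sgroup_iff.mp hs
  refine ⟨fun i => c i, fun i => Nat.cast_nonneg _, funext fun j => ?_⟩
  simp [toReal, Finset.sum_apply]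

lemma smul_mem_coneS {t : ℝ} (ht : 0 ≤ t) (i : Fin r) : t • toReal (b i) ∈ coneS b :=
  ⟨Pi.single i t, fun j => by by_cases hj : j = i <;> simp [hj, ht], by simp [Pi.single_apply]⟩

lemma add_mem_coneS {x y : Fin n → ℝ} (hx : x ∈ coneS b) (hy : y ∈ coneS b) :
    x + y ∈ coneS b := by
  obtain ⟨lx, hlx, rfl⟩ := hx
  obtain ⟨ly, hly, rfl⟩ := hy
  exact ⟨lx + ly, fun i => add_nonneg (hlx i) (hly i),
    by simp [add_smul, Finset.sum_add_distrib]⟩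

lemma convex_coneS : Convex ℝ (coneS b) := by
  rintro _ ⟨lx, hlx, rfl⟩ _ ⟨ly, hly, rfl⟩ s t hs ht -
  refine ⟨s • lx + t • ly, fun i => ?_, ?_⟩
  · exact add_nonneg (mul_nonneg hs (hlx i)) (mul_nonneg ht (hly i))
  · simp [Finset.smul_sum, add_smul, smul_smul, Finset.sum_add_distrib]

lemma nonneg_of_mem_coneS (hb_nonneg : ∀ i j, 0 ≤ b i j) {x : Fin n → ℝ} (hx : x ∈ coneS b) :
    0 ≤ x := by
  obtain ⟨lam, hlam, rfl⟩ := hx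
  exact Finset.sum_nonneg fun i _ =>
    smul_nonneg (hlam i) (toReal_nonneg fun j => hb_nonneg i j)

lemma isClosed_coneS (hb_ne : ∀ i, b i ≠ 0) (hb_nonneg : ∀ i j, 0 ≤ b i j) :
    IsClosed (coneS b) := by
  refine isClosed_setOf_nonneg_sum_smul _ (∑ j, ContinuousLinearMap.proj j) fun i => ?_
  simpa [dotProduct_one] using
    dotProduct_one_pos (toReal_nonneg fun j => hb_nonneg i j) (toReal_ne_zero (hb_ne i))

lemma exists_dotProduct_one_le_mul (hb_nonneg : ∀ i j, 0 ≤ b i j) {w : Fin n → ℝ}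
    (hw : ∀ i, 0 < toReal (b i) ⬝ᵥ w) :
    ∃ K, 0 ≤ K ∧ ∀ x ∈ coneS b, x ⬝ᵥ 1 ≤ K * (x ⬝ᵥ w) := by
  have hb1 : ∀ i, 0 ≤ toReal (b i) ⬝ᵥ 1 := fun i => by
    rw [dotProduct_one]; exact Finset.sum_nonneg fun j _ => toReal_nonneg (hb_nonneg i) j
  set K := ∑ i, toReal (b i) ⬝ᵥ 1 / toReal (b i) ⬝ᵥ w
  have hratio : ∀ i, toReal (b i) ⬝ᵥ 1 / toReal (b i) ⬝ᵥ w ≤ K := fun i =>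
    Finset.single_le_sum (fun j _ => div_nonneg (hb1 j) (hw j).le) (Finset.mem_univ i)
  refine ⟨K, Finset.sum_nonneg fun i _ => div_nonneg (hb1 i) (hw i).le, ?_⟩
  rintro _ ⟨lam, hlam, rfl⟩
  simp only [sum_dotProduct, smul_dotProduct, smul_eq_mul, Finset.mul_sum]
  refine Finset.sum_le_sum fun i _ => ?_
  rw [mul_left_comm]
  exact mul_le_mul_of_nonneg_left ((div_le_iff₀ (hw i)).mp (hratio i)) (hlam i)

lemma finite_setOf_mem_sgroup_weight_le (hb_nonneg : ∀ i j, 0 ≤ b i j) {w : Fin n → ℝ}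
    (hw : ∀ i, 0 < toReal (b i) ⬝ᵥ w) (B : ℝ) :
    {d : Fin n →₀ ℕ | expToZ d ∈ Sgroup b ∧ weight w d ≤ B}.Finite := by
  obtain ⟨K, hK, hKS⟩ := exists_dotProduct_one_le_mul hb_nonneg hw
  refine (finite_of_degree_le ⌈K * B⌉₊).subset fun d ⟨hdS, hdB⟩ => ?_
  have hdeg : ((degree d : ℕ) : ℝ) = toReal (expToZ d) ⬝ᵥ 1 := by
    simp [degree_eq_sum, dotProduct_one, toReal, expToZ]
  have : ((degree d : ℕ) : ℝ) ≤ ⌈K * B⌉₊ := calc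
    ((degree d : ℕ) : ℝ) ≤ K * weight w d := by
      rw [hdeg, weight_eq_dotProduct]; exact hKS _ (toReal_mem_coneS hdS)
    _ ≤ K * B := mul_le_mul_of_nonneg_left hdB hK
    _ ≤ ⌈K * B⌉₊ := Nat.le_ceil _
  exact_mod_cast this

lemma exists_isLeast_weights_of_mem_rs (hb_nonneg : ∀ i j, 0 ≤ b i j) {w : Fin n → ℝ}
    (hw : ∀ i, 0 < toReal (b i) ⬝ᵥ w) {f : MvPowerSeries (Fin n) ℂ} (hf : f ∈ RS b)
    (hf0 : f ≠ 0) : ∃ W, IsLeast (weights w f) W :=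
  exists_isLeast_weights hf0 fun B =>
    (finite_setOf_mem_sgroup_weight_le hb_nonneg hw B).subset fun d ⟨hd, hdB⟩ => ⟨hf d hd, hdB⟩

/-- Dickson's lemma, transported to `S` through `ℕʳ → S, c ↦ ∑ cᵢ bᵢ`. -/
lemma exists_finite_subset_add_sgroup {A : Set (Fin n → ℤ)} (hA : A ⊆ Sgroup b) :
    ∃ F ⊆ A, F.Finite ∧ A ⊆ F + Sgroup b := by
  set ψ : (Fin r → ℕ) → Fin n → ℤ := fun c => ∑ i, c i • b i
  set M := {c | Minimal (fun c => ψ c ∈ A) c}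
  refine ⟨ψ '' M, fun _ ⟨c, hc, hcA⟩ => hcA ▸ Minimal.prop (P := fun c => ψ c ∈ A) hc,
    (WellQuasiOrderedLE.finite_of_isAntichain (setOfPred_minimal_antichain _)).image ψ,
    fun a ha => ?_⟩
  obtain ⟨c, rfl⟩ := mem_sgroup_iff.mp (hA ha)
  obtain ⟨m, hmc, hm⟩ := exists_minimal_le_of_wellFoundedLT (fun c => ψ c ∈ A) c ha
  refine ⟨ψ m, ⟨m, hm, rfl⟩, ψ (c - m), mem_sgroup_iff.mpr ⟨c - m, rfl⟩, ?_⟩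
  simp only [ψ, ← Finset.sum_add_distrib, ← add_nsmul, Pi.sub_apply, Nat.add_sub_cancel' (hmc _)]

lemma toReal_mem_newtonPoly {A : Set (Fin n → ℤ)} {k : Fin n → ℤ} (hk : k ∈ A) :
    toReal k ∈ NewtonPoly b A :=
  subset_convexHull ℝ _ ⟨k, hk, 0, ⟨0, fun _ => le_rfl, by simp⟩, (add_zero _).symm⟩

lemma newtonPoly_eq_convexHull_add {A F : Set (Fin n → ℤ)} (hFA : F ⊆ A)
    (hAF : A ⊆ F + Sgroup b) : NewtonPoly b A = convexHull ℝ (toReal '' F) + coneS b := by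
  apply subset_antisymm
  · refine convexHull_min ?_ ((convex_convexHull ℝ _).add convex_coneS)
    rintro _ ⟨k, hk, v, hv, rfl⟩
    obtain ⟨f, hf, s, hs, rfl⟩ := hAF hk
    rw [toReal_add, add_assoc]
    exact Set.add_mem_add (subset_convexHull ℝ _ ⟨f, hf, rfl⟩)
      (add_mem_coneS (toReal_mem_coneS hs) hv)
  · rw [← convex_coneS.convexHull_eq, ← convexHull_add]
    refine convexHull_mono ?_
    rintro _ ⟨_, ⟨f, hf, rfl⟩, v, hv, rfl⟩
    exact ⟨f, hFA hf, v, hv, rfl⟩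

lemma isClosed_newtonPoly (hb_ne : ∀ i, b i ≠ 0) (hb_nonneg : ∀ i j, 0 ≤ b i j)
    {A : Set (Fin n → ℤ)} (hA : A ⊆ Sgroup b) : IsClosed (NewtonPoly b A) := by
  obtain ⟨F, hFA, hF, hAF⟩ := exists_finite_subset_add_sgroup hA
  rw [newtonPoly_eq_convexHull_add hFA hAF]
  exact (isClosed_coneS hb_ne hb_nonneg).add_left_of_isCompact
    ((hF.image toReal).isCompact_convexHull (𝕜 := ℝ))

lemma add_mem_newtonPoly {A : Set (Fin n → ℤ)} (hA : A ⊆ Sgroup b) {x v : Fin n → ℝ}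
    (hx : x ∈ NewtonPoly b A) (hv : v ∈ coneS b) : x + v ∈ NewtonPoly b A := by
  obtain ⟨F, hFA, -, hAF⟩ := exists_finite_subset_add_sgroup hA
  rw [newtonPoly_eq_convexHull_add hFA hAF] at hx ⊢
  obtain ⟨y, hy, v', hv', rfl⟩ := hx
  rw [add_assoc]
  exact Set.add_mem_add hy (add_mem_coneS hv' hv)

lemma nonneg_of_mem_newtonPoly (hb_nonneg : ∀ i j, 0 ≤ b i j) {A : Set (Fin n → ℤ)}
    (hA : A ⊆ Sgroup b) {x : Fin n → ℝ} (hx : x ∈ NewtonPoly b A) : 0 ≤ x := by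
  refine convexHull_min ?_ (convex_Ici 0) hx
  rintro _ ⟨k, hk, v, hv, rfl⟩
  exact add_nonneg (toReal_nonneg (nonneg_of_mem_sgroup hb_nonneg (hA hk)))
    (nonneg_of_mem_coneS hb_nonneg hv)

lemma toReal_expToZ_mem_newtonIdeal (hb_ne : ∀ i, b i ≠ 0) (hb_nonneg : ∀ i j, 0 ≤ b i j)
    {I : Ideal ↥(RS b)} {h : ↥(RS b)} (hint : IsIntegralOverIdeal I h) {d : Fin n →₀ ℕ}
    (hd : coeff d (h : MvPowerSeries (Fin n) ℂ) ≠ 0) : toReal (expToZ d) ∈ NewtonIdeal b I := by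
  have hQ : ⋃ g ∈ (I : Set ↥(RS b)), suppZ (g : MvPowerSeries (Fin n) ℂ) ⊆ Sgroup b := by
    simp only [Set.iUnion_subset_iff]
    rintro g - _ ⟨d', hd', rfl⟩
    exact g.2 d' hd'
  by_contra hout
  obtain ⟨w, hw, u, hdu, hIu⟩ := exists_separating_weight
    (fun i => toReal_nonneg (hb_nonneg i)) (fun i => toReal_ne_zero (hb_ne i))
    (convex_convexHull ℝ _) (isClosed_newtonPoly hb_ne hb_nonneg hQ)
    (fun _ => nonneg_of_mem_newtonPoly hb_nonneg hQ)
    (fun x hx i t ht => add_mem_newtonPoly hQ hx (smul_mem_coneS ht i))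
    (toReal_nonneg (expToZ_nonneg d)) hout
  have hI : ∀ g ∈ I, u ∈ lowerBounds (weights w ((RS b).val g)) := by
    rintro g hg _ ⟨d', hd', rfl⟩
    rw [weight_eq_dotProduct]
    exact (hIu _ (toReal_mem_newtonPoly (Set.mem_biUnion hg ⟨d', hd', rfl⟩))).le
  obtain ⟨W, hW⟩ := exists_isLeast_weights_of_mem_rs hb_nonneg hw h.2
    (fun h0 => hd (by rw [h0, map_zero]))
  have hWu : W < u := (hW.2 (mem_weights hd)).trans_lt (weight_eq_dotProduct w d ▸ hdu)
  exact not_isIntegralOverIdeal_of_weights_lt (RS b).val.toRingHom hW hI hWu hint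

lemma monomialZ_mem_rs (hb_nonneg : ∀ i j, 0 ≤ b i j) {s : Fin n → ℤ} (hs : s ∈ Sgroup b) :
    monomialZ s ∈ RS b := by
  intro d hd
  rw [monomialZ, coeff_monomial] at hd
  split_ifs at hd with hds
  · rwa [hds, expToZ_natExp (nonneg_of_mem_sgroup hb_nonneg hs)]
  · exact absurd rfl hd

/-- Peeling off the exponents in `β + S` writes `f = x^β g + f'` with `supp f' ⊆ F + S`. -/
lemma mem_span_monomialZ_of_suppZ_subset (hb_nonneg : ∀ i j, 0 ≤ b i j)
    {F : Set (Fin n → ℤ)} (hF : F.Finite) (hFS : F ⊆ Sgroup b) {f : ↥(RS b)}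
    (hf : suppZ (f : MvPowerSeries (Fin n) ℂ) ⊆ F + Sgroup b) :
    f ∈ Ideal.span {m : ↥(RS b) | ∃ s ∈ F, (m : MvPowerSeries (Fin n) ℂ) = monomialZ s} := by
  classical
  induction F, hF using Set.Finite.induction_on generalizing f with
  | empty =>
    have : f = 0 := Subtype.ext <| MvPowerSeries.ext fun d => by
      by_contra hd
      simpa using hf ⟨d, hd, rfl⟩
    exact this ▸ Ideal.zero_mem _
  | @insert β F hβF hF ih =>
    have hβS := hFS (Set.mem_insert β F)
    set e := natExp β
    have he : expToZ e = β := expToZ_natExp (nonneg_of_mem_sgroup hb_nonneg hβS)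
    let g : MvPowerSeries (Fin n) ℂ := fun d =>
      if expToZ d ∈ Sgroup b then coeff (d + e) (f : MvPowerSeries (Fin n) ℂ) else 0
    have hg : g ∈ RS b := fun d hd => by
      by_contra hdS
      exact hd (if_neg hdS : g d = 0)
    set f₁ : ↥(RS b) := ⟨monomialZ β, monomialZ_mem_rs hb_nonneg hβS⟩ * ⟨g, hg⟩
    have hf₁ : ∀ d, coeff d (f₁ : MvPowerSeries (Fin n) ℂ) =
        if e ≤ d ∧ expToZ (d - e) ∈ Sgroup b then coeff d (f : MvPowerSeries (Fin n) ℂ)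
        else 0 := fun d => by
      change coeff d (monomial e 1 * g) = _
      rw [coeff_monomial_mul, one_mul]
      by_cases hed : e ≤ d
      · simp only [hed, true_and, if_true]
        exact congrArg (ite _ · 0) (congrArg (coeff · _) (tsub_add_cancel_of_le hed))
      · simp [hed]
    have hrest : suppZ ((f - f₁ : ↥(RS b)) : MvPowerSeries (Fin n) ℂ) ⊆ F + Sgroup b := by
      rintro _ ⟨d, hd, rfl⟩
      rw [Subalgebra.coe_sub, map_sub, hf₁] at hd
      split_ifs at hd with hcond
      · exact absurd (sub_self _) hd
      rw [sub_zero] at hd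
      obtain ⟨γ, hγ, s, hs, hγs⟩ := hf ⟨d, hd, rfl⟩
      rcases hγ with rfl | hγF
      · rw [← he] at hγs
        exact absurd (le_of_expToZ_eq_add (nonneg_of_mem_sgroup hb_nonneg hs) hγs.symm)
          fun h => hcond ⟨h.1, h.2 ▸ hs⟩
      · exact ⟨γ, hγF, s, hs, hγs⟩
    rw [← add_sub_cancel f₁ f]
    refine Ideal.add_mem _
      (Ideal.mul_mem_right _ _ (Ideal.subset_span ⟨β, Set.mem_insert β F, rfl⟩))
      (Ideal.span_mono ?_ (ih (fun s hs => hFS (Set.mem_insert_of_mem β hs)) hrest))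
    rintro m ⟨s, hs, hm⟩
    exact ⟨s, Set.mem_insert_of_mem β hs, hm⟩

end

theorem closure_subset_icirc_general
    (n r : ℕ) (b : Fin r → Fin n → ℤ)
    (hb_ne : ∀ i, b i ≠ 0) (hb_nonneg : ∀ i j, 0 ≤ b i j)
    (I : Ideal ↥(RS b)) (h : ↥(RS b)) (hint : IsIntegralOverIdeal I h) :
    h ∈ Icirc b I := by
  obtain ⟨F, hFA, hF, hAF⟩ := exists_finite_subset_add_sgroup
    (A := {s | s ∈ Sgroup b ∧ toReal s ∈ NewtonIdeal b I}) fun s hs => hs.1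
  refine Ideal.span_mono ?_
    (mem_span_monomialZ_of_suppZ_subset hb_nonneg hF (fun s hs => (hFA hs).1) ?_)
  · rintro m ⟨s, hs, hm⟩
    exact ⟨s, (hFA hs).1, (hFA hs).2, hm⟩
  · rintro _ ⟨d, hd, rfl⟩
    exact hAF ⟨h.2 d hd, toReal_expToZ_mem_newtonIdeal hb_ne hb_nonneg hint hd⟩

/-- for every ideal `I` of `R_S`, `Ī ⊆ I°`. -/
theorem closure_subset_icirc
    (n r : ℕ) (hn : 1 ≤ n) (hr : 1 ≤ r) (b : Fin r → Fin n → ℤ)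
    (hb_ne : ∀ i, b i ≠ 0) (hb_nonneg : ∀ i j, 0 ≤ b i j)
    (hb_gen : AddSubgroup.closure (Set.range b) = (⊤ : AddSubgroup (Fin n → ℤ)))
    (hdim : Submodule.span ℝ (coneS b) = (⊤ : Submodule ℝ (Fin n → ℝ)))
    (hstrict : ∀ x ∈ coneS b, -x ∈ coneS b → x = (0 : Fin n → ℝ))
    (I : Ideal ↥(RS b)) (h : ↥(RS b)) (hint : IsIntegralOverIdeal I h) :
    h ∈ Icirc b I :=
  closure_subset_icirc_general n r b hb_ne hb_nonneg I h hint

end ToricNewton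
end
end

section
/- Let n = 2 and S₀ = {(1,0), (1,1), (1,2)} (the semigroup of the toric surface xz = y²). In R_S let I be the ideal generated by f = x^{(3,1)} + 3·x^{(3,2)} and g = x^{(3,3)} − x^{(2,1)} + x^{(2,4)}. Then (2,2) ∈ Γ₊(I), so the monomial x^{(2,2)} belongs to I°, but x^{(2,2)} is not integral over I; in particular I° is not contained in Ī. -/
open scoped BigOperators

noncomputable section

namespace ToricNewton

/-- The generators `S₀ = {(1,0), (1,1), (1,2)}` of the semigroup of the toric
surface `xz = y²`. -/
def bEx : Fin 3 → Fin 2 → ℤ := ![![1, 0], ![1, 1], ![1, 2]]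

/-!
Every exponent `(a, b) ∈ S` satisfies `b ≤ 2a`, so only finitely many monomials of an element of
`R_S` contribute to each power of `t` under `x₁ ↦ t`, `x₂ ↦ 1`; this substitution is therefore a
ring homomorphism `χ : R_S → ℂ[[t]]`. It sends `f` to `4t³` and `g` to `t³` (the terms
`x^{(2,1)}` and `x^{(2,4)}` cancel), so `χ(I) ⊆ (t³)`, whereas `χ(x^{(2,2)}) = t²` is not integral
over `(t³)`. On the other hand `(2,2) = ⅔ (2,1) + ⅓ (2,4)` lies in `Γ₊(I)`.
-/

section SubstSndOne

open MvPowerSeries Finset.HasAntidiagonal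

variable {R : Type*} [CommSemiring R] (N : ℕ)

def SupportedInCone (F : MvPowerSeries (Fin 2) R) : Prop :=
  ∀ d : Fin 2 →₀ ℕ, coeff d F ≠ 0 → d 1 ≤ N * d 0

def coneSlice (k : ℕ) : Finset (Fin 2 →₀ ℕ) :=
  {d ∈ Finset.Iic (Finsupp.single 0 k + Finsupp.single 1 (N * k)) | d 0 = k}

variable {N} in
lemma mem_coneSlice {k : ℕ} {d : Fin 2 →₀ ℕ} : d ∈ coneSlice N k ↔ d 0 = k ∧ d 1 ≤ N * k := by
  simp only [coneSlice, Finset.mem_filter, Finset.mem_Iic, Finsupp.le_def, Fin.forall_fin_two,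
    Finsupp.add_apply, Finsupp.single_apply]
  simp
  omega

/-- Setting `x₂ = 1`. Monomials with `x₂`-degree above `N` times the `x₁`-degree are dropped, so
this is multiplicative only on series supported in that cone. -/
def substSndOne : MvPowerSeries (Fin 2) R →ₗ[R] PowerSeries R where
  toFun F := PowerSeries.mk fun k => ∑ d ∈ coneSlice N k, coeff d F
  map_add' F G := by ext k; simp [Finset.sum_add_distrib]
  map_smul' c F := by ext k; simp [Finset.mul_sum]

lemma coeff_substSndOne (F : MvPowerSeries (Fin 2) R) (k : ℕ) :
    PowerSeries.coeff k (substSndOne N F) = ∑ d ∈ coneSlice N k, coeff d F := by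
  simp [substSndOne]

variable {N}

lemma substSndOne_monomial {e : Fin 2 →₀ ℕ} (he : e 1 ≤ N * e 0) (c : R) :
    substSndOne N (monomial e c) = PowerSeries.monomial (e 0) c := by
  classical
  ext k
  simp only [coeff_substSndOne, coeff_monomial, PowerSeries.coeff_monomial,
    Finset.sum_ite_eq', mem_coneSlice]
  by_cases hk : k = e 0
  · subst hk; simp [he]
  · simp [Ne.symm hk, hk]

lemma substSndOne_one : substSndOne N (1 : MvPowerSeries (Fin 2) R) = 1 := by
  rw [← monomial_zero_one, substSndOne_monomial (by simp)]
  simp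

variable (N) in
lemma coeff_substSndOne_mul_substSndOne (F G : MvPowerSeries (Fin 2) R) (k : ℕ) :
    PowerSeries.coeff k (substSndOne N F * substSndOne N G) =
      ∑ x ∈ (antidiagonal k).biUnion (fun ij => coneSlice N ij.1 ×ˢ coneSlice N ij.2),
        coeff x.1 F * coeff x.2 G := by
  classical
  rw [PowerSeries.coeff_mul, Finset.sum_biUnion]
  · refine Finset.sum_congr rfl fun ij _ => ?_
    rw [coeff_substSndOne, coeff_substSndOne, Finset.sum_mul_sum, Finset.sum_product]
  · intro ij _ ij' _ hne
    refine Finset.disjoint_left.2 fun x hx hx' => hne ?_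
    simp only [Finset.mem_product, mem_coneSlice] at hx hx'
    exact Prod.ext (hx.1.1.symm.trans hx'.1.1) (hx.2.1.symm.trans hx'.2.1)

variable (N) in
lemma coeff_substSndOne_mul (F G : MvPowerSeries (Fin 2) R) (k : ℕ) :
    PowerSeries.coeff k (substSndOne N (F * G)) =
      ∑ x ∈ (coneSlice N k).biUnion antidiagonal, coeff x.1 F * coeff x.2 G := by
  classical
  rw [coeff_substSndOne, Finset.sum_biUnion]
  · exact Finset.sum_congr rfl fun d _ => coeff_mul d F G
  · intro d _ d' _ hne
    refine Finset.disjoint_left.2 fun x hx hx' => hne ?_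
    rw [mem_antidiagonal] at hx hx'
    exact hx.symm.trans hx'

lemma substSndOne_mul {F G : MvPowerSeries (Fin 2) R}
    (hF : SupportedInCone N F) (hG : SupportedInCone N G) :
    substSndOne N (F * G) = substSndOne N F * substSndOne N G := by
  classical
  ext k
  rw [coeff_substSndOne_mul, coeff_substSndOne_mul_substSndOne]
  -- Pairs counted for `F * G` but not in the product have a factor outside the cone.
  refine (Finset.sum_subset ?_ ?_).symm
  · intro x hx
    simp only [Finset.mem_biUnion, Finset.mem_product, mem_antidiagonal, mem_coneSlice] at hx ⊢
    obtain ⟨ij, rfl, ⟨hi, hi'⟩, hj, hj'⟩ := hx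
    refine ⟨x.1 + x.2, ⟨?_, ?_⟩, rfl⟩ <;> simp only [Finsupp.add_apply]
    · rw [hi, hj]
    · rw [mul_add]
      exact add_le_add hi' hj'
  · intro x hxP hxQ
    by_contra hne
    obtain ⟨d, hd, hx⟩ := Finset.mem_biUnion.1 hxP
    rw [mem_antidiagonal] at hx
    subst hx
    refine hxQ (Finset.mem_biUnion.2 ⟨(x.1 0, x.2 0), ?_, ?_⟩)
    · simpa [mem_antidiagonal] using (mem_coneSlice.1 hd).1
    · simp only [Finset.mem_product, mem_coneSlice, true_and]
      exact ⟨hF _ (left_ne_zero_of_mul hne), hG _ (right_ne_zero_of_mul hne)⟩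

end SubstSndOne

lemma le_two_mul_of_mem_Sgroup_bEx {s : Fin 2 → ℤ} (hs : s ∈ Sgroup bEx) : s 1 ≤ 2 * s 0 := by
  induction hs using AddSubmonoid.closure_induction with
  | mem x hx =>
    obtain ⟨i, rfl⟩ := hx
    fin_cases i <;> decide
  | zero => simp
  | add x y _ _ hx hy =>
    simp only [Pi.add_apply]
    omega

lemma supportedInCone_of_mem_RS {F : MvPowerSeries (Fin 2) ℂ} (hF : F ∈ RS bEx) :
    SupportedInCone 2 F := fun d hd => by
  have := le_two_mul_of_mem_Sgroup_bEx (hF d hd)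
  simp only [expToZ] at this
  exact_mod_cast this

def chi : RS bEx →+* PowerSeries ℂ where
  toFun F := substSndOne 2 (F : MvPowerSeries (Fin 2) ℂ)
  map_one' := substSndOne_one
  map_mul' F G := substSndOne_mul (supportedInCone_of_mem_RS F.2) (supportedInCone_of_mem_RS G.2)
  map_zero' := map_zero _
  map_add' _ _ := map_add _ _ _

lemma chi_apply (F : RS bEx) : chi F = substSndOne 2 (F : MvPowerSeries (Fin 2) ℂ) := rfl

lemma substSndOne_monomialZ {N : ℕ} {s : Fin 2 → ℤ} (hs : (s 1).toNat ≤ N * (s 0).toNat) :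
    substSndOne N (monomialZ s) = PowerSeries.X ^ (s 0).toNat := by
  rw [monomialZ, substSndOne_monomial hs, PowerSeries.X_pow_eq]
  rfl

section IntegralOverIdeal

variable {A B : Type*} [CommRing A] [CommRing B]

lemma IsIntegralOverIdeal.mono {I J : Ideal A} (hIJ : I ≤ J) {h : A}
    (hh : IsIntegralOverIdeal I h) : IsIntegralOverIdeal J h := by
  obtain ⟨m, hm, a, ha, heq⟩ := hh
  exact ⟨m, hm, a, fun i => Ideal.pow_right_mono hIJ _ (ha i), heq⟩

lemma IsIntegralOverIdeal.map (φ : A →+* B) {I : Ideal A} {h : A}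
    (hh : IsIntegralOverIdeal I h) : IsIntegralOverIdeal (I.map φ) (φ h) := by
  obtain ⟨m, hm, a, ha, heq⟩ := hh
  refine ⟨m, hm, fun i => φ (a i), fun i => ?_, by simpa using congrArg φ heq⟩
  rw [← Ideal.map_pow]
  exact Ideal.mem_map_of_mem φ (ha i)

end IntegralOverIdeal

open PowerSeries in
/-- Each `cᵢ (Xᵃ)ᵐ⁻¹⁻ⁱ` with `cᵢ ∈ (Xᵇ)ⁱ⁺¹` is divisible by `X^(a m + 1)`, but `(Xᵃ)ᵐ` is not. -/
lemma not_isIntegralOverIdeal_X_pow {R : Type*} [CommRing R] [Nontrivial R] {a b : ℕ}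
    (hab : a < b) : ¬ IsIntegralOverIdeal (Ideal.span {(X : PowerSeries R) ^ b}) (X ^ a) := by
  rintro ⟨m, -, c, hc, heq⟩
  have hsum : (X : PowerSeries R) ^ (a * m + 1) ∣ ∑ i, c i * (X ^ a) ^ (m - 1 - (i : ℕ)) := by
    refine Finset.dvd_sum fun i _ => ?_
    have hci := hc i
    rw [Ideal.span_singleton_pow, Ideal.mem_span_singleton, ← pow_mul] at hci
    have hexp : a * m + 1 ≤ b * (i + 1) + a * (m - 1 - i) := by
      have hm : m = (m - 1 - i) + (i + 1) := by omega
      have := Nat.mul_le_mul_right ((i : ℕ) + 1) (Nat.succ_le_of_lt hab)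
      nth_rewrite 1 [hm]
      nlinarith
    rw [← pow_mul]
    exact (pow_dvd_pow _ hexp).trans (by rw [pow_add]; exact mul_dvd_mul_right hci _)
  rw [← pow_mul, add_eq_zero_iff_eq_neg] at heq
  have hdvd := (dvd_neg.2 hsum)
  rw [← heq, X_pow_dvd_iff] at hdvd
  simpa using hdvd (a * m) (Nat.lt_succ_self _)

lemma toReal_mem_NewtonPoly {n r : ℕ} (b : Fin r → Fin n → ℤ) {A : Set (Fin n → ℤ)}
    {k : Fin n → ℤ} (hk : k ∈ A) : toReal k ∈ NewtonPoly b A :=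
  subset_convexHull ℝ _ ⟨k, hk, 0, ⟨0, fun _ => le_rfl, by simp⟩, by simp⟩

lemma toReal_mem_NewtonIdeal {n r : ℕ} (b : Fin r → Fin n → ℤ) {I : Ideal (RS b)}
    {g : RS b} (hg : g ∈ I) {s : Fin n → ℤ} (hs : s ∈ suppZ (g : MvPowerSeries (Fin n) ℂ)) :
    toReal s ∈ NewtonIdeal b I :=
  toReal_mem_NewtonPoly b (Set.mem_biUnion hg hs)

lemma mem_suppZ {n : ℕ} {g : MvPowerSeries (Fin n) ℂ} {s : Fin n → ℤ} (hs : 0 ≤ s)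
    (h : coeffZ g s ≠ 0) : s ∈ suppZ g :=
  ⟨natExp s, h, funext fun i => by simp [expToZ, natExp, Int.toNat_of_nonneg (hs i)]⟩

lemma mem_Sgroup_bEx_two_two : (![2, 2] : Fin 2 → ℤ) ∈ Sgroup bEx := by
  have h02 : bEx 0 + bEx 2 = ![2, 2] := by decide
  exact h02 ▸ add_mem (AddSubmonoid.subset_closure ⟨0, rfl⟩) (AddSubmonoid.subset_closure ⟨2, rfl⟩)

lemma toReal_two_two_mem_NewtonIdeal {I : Ideal (RS bEx)} {g : RS bEx} (hgI : g ∈ I)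
    (hg : (g : MvPowerSeries (Fin 2) ℂ) =
      monomialZ ![3, 3] - monomialZ ![2, 1] + monomialZ ![2, 4]) :
    toReal ![2, 2] ∈ NewtonIdeal bEx I := by
  have hsupp (s : Fin 2 → ℤ) (hs : s = ![2, 1] ∨ s = ![2, 4]) : toReal s ∈ NewtonIdeal bEx I := by
    refine toReal_mem_NewtonIdeal bEx hgI (mem_suppZ ?_ ?_) <;>
      rcases hs with rfl | rfl <;> simp [Pi.le_def, Fin.forall_fin_two, hg, coeffZ, monomialZ,
        MvPowerSeries.coeff_monomial, natExp, funext_iff]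
  have hcomb : toReal ![2, 2] = (2 / 3 : ℝ) • toReal ![2, 1] + (1 / 3 : ℝ) • toReal ![2, 4] := by
    funext i; fin_cases i <;> norm_num [toReal]
  rw [hcomb]
  exact convex_convexHull ℝ _ (hsupp _ (.inl rfl)) (hsupp _ (.inr rfl))
    (by norm_num) (by norm_num) (by norm_num)

lemma map_chi_span_le {f g : RS bEx}
    (hf : (f : MvPowerSeries (Fin 2) ℂ) = monomialZ ![3, 1] + (3 : ℂ) • monomialZ ![3, 2])
    (hg : (g : MvPowerSeries (Fin 2) ℂ) =
      monomialZ ![3, 3] - monomialZ ![2, 1] + monomialZ ![2, 4]) :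
    (Ideal.span {f, g}).map chi ≤ Ideal.span {PowerSeries.X ^ 3} := by
  have hchif : chi f = PowerSeries.X ^ 3 + (3 : ℂ) • PowerSeries.X ^ 3 := by
    rw [chi_apply, hf, map_add, map_smul, substSndOne_monomialZ (by decide),
      substSndOne_monomialZ (by decide)]
    rfl
  have hchig : chi g = PowerSeries.X ^ 3 := by
    rw [chi_apply, hg, map_add, map_sub, substSndOne_monomialZ (by decide),
      substSndOne_monomialZ (by decide), substSndOne_monomialZ (by decide)]
    exact sub_add_cancel _ _
  rw [Ideal.map_span, Set.image_pair, Ideal.span_le, Set.insert_subset_iff,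
    Set.singleton_subset_iff, hchif, hchig]
  exact ⟨Ideal.add_mem _ (Ideal.mem_span_singleton_self _)
    (Submodule.smul_of_tower_mem _ _ (Ideal.mem_span_singleton_self _)),
    Ideal.mem_span_singleton_self _⟩

/-- for `I = ⟨x^{(3,1)} + 3x^{(3,2)}, x^{(3,3)} − x^{(2,1)} + x^{(2,4)}⟩`
one has `(2,2) ∈ Γ₊(I)`, hence `x^{(2,2)} ∈ I°`, but `x^{(2,2)}` is not integral
over `I`; in particular `I°` is not contained in `Ī`. -/
theorem example_icirc_not_subset_closure
    (f g m : ↥(RS bEx))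
    (hf : (f : MvPowerSeries (Fin 2) ℂ) = monomialZ ![3, 1] + (3 : ℂ) • monomialZ ![3, 2])
    (hg : (g : MvPowerSeries (Fin 2) ℂ) =
      monomialZ ![3, 3] - monomialZ ![2, 1] + monomialZ ![2, 4])
    (hm : (m : MvPowerSeries (Fin 2) ℂ) = monomialZ ![2, 2]) :
    toReal ![2, 2] ∈ NewtonIdeal bEx (Ideal.span {f, g}) ∧
    m ∈ Icirc bEx (Ideal.span {f, g}) ∧
    ¬ IsIntegralOverIdeal (Ideal.span {f, g}) m ∧
    ¬ ∀ h ∈ Icirc bEx (Ideal.span {f, g}),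
        IsIntegralOverIdeal (Ideal.span {f, g}) h := by
  have hgI : g ∈ Ideal.span {f, g} := Ideal.subset_span (by simp)
  have hNewton := toReal_two_two_mem_NewtonIdeal hgI hg
  have hmI : m ∈ Icirc bEx (Ideal.span {f, g}) :=
    Ideal.subset_span ⟨![2, 2], mem_Sgroup_bEx_two_two, hNewton, hm⟩
  have hchim : chi m = PowerSeries.X ^ 2 := by
    rw [chi_apply, hm, substSndOne_monomialZ (by decide)]
    rfl
  have hnot : ¬ IsIntegralOverIdeal (Ideal.span {f, g}) m := fun hint =>
    not_isIntegralOverIdeal_X_pow (by norm_num : 2 < 3)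
      (hchim ▸ (hint.map chi).mono (map_chi_span_le hf hg))
  exact ⟨hNewton, hmI, hnot, fun hall => hnot (hall m hmI)⟩

end ToricNewton
end
end
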